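/- arXiv:2507.12791 — 5 statements merged into one kernel-verified Lean document; each statement's English description precedes it below -/
import Mathlib

section
/- Let μ, ν, π be probability measures with q > 1 and λ ∈ (0,1). Then the Rényi divergence satisfies the weak triangle inequality R_q(μ ‖ π) ≤ ((q-λ)/(q-1)) R_{q/λ}(μ ‖ ν) + R_{(q-λ)/(1-λ)}(ν ‖ π). -/
open MeasureTheory
open scoped Classical

/-- The `q`-Rényi divergence `R_q(μ ‖ ν) = (q-1)⁻¹ log ∫ (dμ/dν)^q dν`, with the
convention that it is `+∞` when `μ` is not absolutely continuous w.r.t. `ν`. -/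
noncomputable def renyiDiv {Ω : Type*} [MeasurableSpace Ω] (q : ℝ) (μ ν : Measure Ω) : EReal :=
  if μ ≪ ν then (((q - 1)⁻¹ : ℝ) : EReal) * ENNReal.log (∫⁻ x, μ.rnDeriv ν x ^ q ∂ν)
  else ⊤

/-! Factor `dμ/dπ = (dμ/dν)(dν/dπ)` and split `((dμ/dν)(dν/dπ))^q` as
`((dν/dπ)(dμ/dν)^(q/λ))^λ · ((dν/dπ)^((q-λ)/(1-λ)))^(1-λ)`. Hölder with weights `λ, 1-λ` bounds
`∫ (dμ/dπ)^q dπ` by `A^λ B^(1-λ)`, where `A = ∫ (dμ/dν)^(q/λ) dν` (the `dν/dπ` factor turns the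
`π`-integral into a `ν`-integral) and `B = ∫ (dν/dπ)^((q-λ)/(1-λ)) dπ`. Taking logarithms and
dividing by `q - 1` gives the inequality. When an absolute continuity fails the right-hand side
is `+∞`, since the divergences of probability measures are nonnegative. -/

section

variable {Ω : Type*} [MeasurableSpace Ω] {μ ν π : Measure Ω}

lemma renyiDiv_of_absolutelyContinuous (hμν : μ ≪ ν) (q : ℝ) :
    renyiDiv q μ ν = (((q - 1)⁻¹ : ℝ) : EReal) * ENNReal.log (∫⁻ x, μ.rnDeriv ν x ^ q ∂ν) :=
  if_pos hμν

lemma renyiDiv_of_not_absolutelyContinuous (hμν : ¬μ ≪ ν) (q : ℝ) : renyiDiv q μ ν = ⊤ :=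
  if_neg hμν

lemma one_le_lintegral_rnDeriv_rpow [IsProbabilityMeasure μ] [IsProbabilityMeasure ν]
    (hμν : μ ≪ ν) {p : ℝ} (hp : 1 ≤ p) : 1 ≤ ∫⁻ x, μ.rnDeriv ν x ^ p ∂ν := by
  have hp₀ : 0 < p := zero_lt_one.trans_le hp
  -- Jensen, as Hölder against the constant `1` with weights `1/p` and `1 - 1/p`
  have holder := ENNReal.lintegral_mul_norm_pow_le (μ := ν)
    ((μ.measurable_rnDeriv ν).pow_const p).aemeasurable (aemeasurable_const (b := (1 : ENNReal)))
    (one_div_nonneg.2 hp₀.le) (sub_nonneg.2 ((div_le_one hp₀).2 hp)) (add_sub_cancel _ _)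
  simp only [← ENNReal.rpow_mul, mul_one_div_cancel hp₀.ne', ENNReal.rpow_one, ENNReal.one_rpow,
    mul_one, lintegral_const, measure_univ, Measure.lintegral_rnDeriv hμν] at holder
  rwa [← ENNReal.one_rpow (1 / p), ENNReal.rpow_le_rpow_iff (by positivity)] at holder

lemma renyiDiv_nonneg [IsProbabilityMeasure μ] [IsProbabilityMeasure ν] {p : ℝ} (hp : 1 ≤ p) :
    0 ≤ renyiDiv p μ ν := by
  by_cases hμν : μ ≪ ν
  · rw [renyiDiv_of_absolutelyContinuous hμν]
    refine EReal.mul_nonneg (EReal.coe_nonneg.2 (inv_nonneg.2 (sub_nonneg.2 hp))) ?_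
    simpa using ENNReal.log_monotone (one_le_lintegral_rnDeriv_rpow hμν hp)
  · simp [renyiDiv_of_not_absolutelyContinuous hμν]

lemma lintegral_rnDeriv_rpow_le [SigmaFinite μ] [SigmaFinite ν] [SigmaFinite π]
    (hμν : μ ≪ ν) (hνπ : ν ≪ π) {q t : ℝ} (ht₀ : 0 < t) (ht₁ : t < 1) (htq : t ≤ q) :
    ∫⁻ x, μ.rnDeriv π x ^ q ∂π ≤
      (∫⁻ x, μ.rnDeriv ν x ^ (q / t) ∂ν) ^ t
        * (∫⁻ x, ν.rnDeriv π x ^ ((q - t) / (1 - t)) ∂π) ^ (1 - t) := by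
  have split : ∀ x, (μ.rnDeriv ν x * ν.rnDeriv π x) ^ q =
      (ν.rnDeriv π x * μ.rnDeriv ν x ^ (q / t)) ^ t
        * (ν.rnDeriv π x ^ ((q - t) / (1 - t))) ^ (1 - t) := by
    intro x
    have hpow : ν.rnDeriv π x ^ q = ν.rnDeriv π x ^ t * ν.rnDeriv π x ^ (q - t) := by
      rw [← ENNReal.rpow_add_of_nonneg _ _ ht₀.le (sub_nonneg.2 htq), add_sub_cancel]
    rw [ENNReal.mul_rpow_of_nonneg _ _ ht₀.le, ← ENNReal.rpow_mul, ← ENNReal.rpow_mul,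
      div_mul_cancel₀ _ ht₀.ne', div_mul_cancel₀ _ (sub_pos.2 ht₁).ne',
      ENNReal.mul_rpow_of_nonneg _ _ (ht₀.le.trans htq), hpow]
    ring
  have hf := μ.measurable_rnDeriv ν
  have hg := ν.measurable_rnDeriv π
  have holder := ENNReal.lintegral_mul_norm_pow_le (μ := π)
    (hg.mul (hf.pow_const (q / t))).aemeasurable (hg.pow_const ((q - t) / (1 - t))).aemeasurable
    ht₀.le (sub_nonneg.2 ht₁.le) (add_sub_cancel _ _)
  simp only [Pi.mul_apply, ← split,
    lintegral_rnDeriv_mul hνπ (hf.pow_const (q / t)).aemeasurable] at holder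
  calc ∫⁻ x, μ.rnDeriv π x ^ q ∂π = ∫⁻ x, (μ.rnDeriv ν x * ν.rnDeriv π x) ^ q ∂π := by
        refine lintegral_congr_ae ?_
        filter_upwards [Measure.rnDeriv_mul_rnDeriv hμν (κ := π)] with x hx
        rw [← hx, Pi.mul_apply]
    _ ≤ _ := holder

lemma renyi_weak_triangle_of_absolutelyContinuous
    [SigmaFinite μ] [SigmaFinite ν] [SigmaFinite π] (hμν : μ ≪ ν) (hνπ : ν ≪ π)
    {q lam : ℝ} (hq : 1 < q) (hlam0 : 0 < lam) (hlam1 : lam < 1) :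
    renyiDiv q μ π ≤
      (((q - lam) / (q - 1) : ℝ) : EReal) * renyiDiv (q / lam) μ ν
        + renyiDiv ((q - lam) / (1 - lam)) ν π := by
  have hlog := ENNReal.log_monotone
    (lintegral_rnDeriv_rpow_le hμν hνπ hlam0 hlam1 (by linarith : lam ≤ q))
  rw [ENNReal.log_mul_add, ENNReal.log_rpow, ENNReal.log_rpow] at hlog
  -- both coefficients on the right are `(q - 1)⁻¹` times the Hölder weights `lam`, `1 - lam`
  have e₁ : (q - lam) / (q - 1) * (q / lam - 1)⁻¹ = (q - 1)⁻¹ * lam := by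
    have : q - lam ≠ 0 := by linarith
    field_simp
  have e₂ : ((q - lam) / (1 - lam) - 1)⁻¹ = (q - 1)⁻¹ * (1 - lam) := by
    rw [div_sub_one (by linarith), sub_sub_sub_cancel_right, inv_div, div_eq_inv_mul]
  have hc₀ : (0 : EReal) ≤ ((q - 1)⁻¹ : ℝ) := EReal.coe_nonneg.2 (inv_nonneg.2 (by linarith))
  rw [renyiDiv_of_absolutelyContinuous (hμν.trans hνπ), renyiDiv_of_absolutelyContinuous hμν,
    renyiDiv_of_absolutelyContinuous hνπ, ← mul_assoc, ← EReal.coe_mul, e₁, e₂, EReal.coe_mul,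
    EReal.coe_mul, mul_assoc, mul_assoc,
    ← EReal.left_distrib_of_nonneg_of_ne_top hc₀ (EReal.coe_ne_top _)]
  exact mul_le_mul_of_nonneg_left hlog hc₀

end

/-- Weak triangle inequality for the Rényi divergence:
`R_q(μ ‖ π) ≤ ((q-λ)/(q-1)) R_{q/λ}(μ ‖ ν) + R_{(q-λ)/(1-λ)}(ν ‖ π)`. -/
theorem renyi_weak_triangle {Ω : Type*} [MeasurableSpace Ω]
    (μ ν π : Measure Ω)
    [IsProbabilityMeasure μ] [IsProbabilityMeasure ν] [IsProbabilityMeasure π]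
    (q lam : ℝ) (hq : 1 < q) (hlam0 : 0 < lam) (hlam1 : lam < 1) :
    renyiDiv q μ π ≤
      (((q - lam) / (q - 1) : ℝ) : EReal) * renyiDiv (q / lam) μ ν
        + renyiDiv ((q - lam) / (1 - lam)) ν π := by
  have hc : 0 < (q - lam) / (q - 1) := div_pos (by linarith) (by linarith)
  have hp₁ : 1 < q / lam := (one_lt_div hlam0).2 (by linarith)
  have hp₂ : 1 < (q - lam) / (1 - lam) := (one_lt_div (by linarith)).2 (by linarith)
  by_cases hμν : μ ≪ ν
  swap
  · rw [renyiDiv_of_not_absolutelyContinuous hμν, EReal.coe_mul_top_of_pos hc,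
      EReal.top_add_of_ne_bot (ne_bot_of_le_ne_bot EReal.zero_ne_bot (renyiDiv_nonneg hp₂.le))]
    exact le_top
  by_cases hνπ : ν ≪ π
  swap
  · rw [renyiDiv_of_not_absolutelyContinuous hνπ, EReal.add_top_of_ne_bot
      (ne_bot_of_le_ne_bot EReal.zero_ne_bot
        (EReal.mul_nonneg (EReal.coe_nonneg.2 hc.le) (renyiDiv_nonneg hp₁.le)))]
    exact le_top
  exact renyi_weak_triangle_of_absolutelyContinuous hμν hνπ hq hlam0 hlam1
end

section
/- For probability measures μ, ν, π (with μ ≪ ν ≪ π), the KL divergence satisfies KL(μ ‖ π) ≤ 2 KL(μ ‖ ν) + log(1 + χ²(ν ‖ π)), where χ²(ν ‖ π) = ∫ (dν/dπ)² dπ − 1. -/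
/-!
Write `f = dμ/dν` and `g = dν/dπ`, so that `dμ/dπ = f g` and
`log (dμ/dπ) = 2 log f + log (g / f)` `μ`-a.e. Bounding `log` by its tangent line at
`R = ∫ g² dπ = ∫ g dν` gives `log (g / f) ≤ (g / f) / R + log R - 1`, and
`∫ g / f dμ ≤ ∫ g dν = R`, so integrating against `μ` yields the inequality. The same upper
bound, together with `-log t ≤ t⁻¹` and `∫ (dμ/dπ)⁻¹ dμ ≤ 1`, makes `log (dμ/dπ)`
`μ`-integrable.
-/

open MeasureTheory
open scoped Classical

/-- The Kullback–Leibler divergence `KL(μ ‖ ν) = ∫ log (dμ/dν) dμ`, with the convention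
that it is `+∞` when `μ` is not absolutely continuous w.r.t. `ν` or the log-likelihood
ratio is not integrable. -/
noncomputable def klDiv {Ω : Type*} [MeasurableSpace Ω] (μ ν : Measure Ω) : EReal :=
  if μ ≪ ν ∧ Integrable (fun x => Real.log (μ.rnDeriv ν x).toReal) μ then
    ((∫ x, Real.log (μ.rnDeriv ν x).toReal ∂μ : ℝ) : EReal)
  else ⊤

open scoped ENNReal

lemma Real.log_mul_le_two_mul_log_add {a b R : ℝ} (ha : 0 < a) (hb : 0 < b) (hR : 0 < R) :
    log (a * b) ≤ 2 * log a + b / a / R + (log R - 1) := by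
  have htangent := log_le_sub_one_of_pos (show 0 < b / a / R by positivity)
  rw [log_div (by positivity) hR.ne', log_div hb.ne' ha.ne'] at htangent
  rw [log_mul ha.ne' hb.ne']
  linarith

lemma ENNReal.neg_log_toReal_le_toReal_inv (a : ℝ≥0∞) : -Real.log a.toReal ≤ a⁻¹.toReal := by
  rcases eq_or_ne a 0 with rfl | h0
  · simp
  rcases eq_or_ne a ⊤ with rfl | htop
  · simp
  have ha : 0 < a.toReal := ENNReal.toReal_pos h0 htop
  rw [ENNReal.toReal_inv, ← Real.log_inv]
  linarith [Real.log_le_sub_one_of_pos (inv_pos.2 ha)]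

section

variable {α : Type*} [MeasurableSpace α] {μ ν π : Measure α}

lemma klDiv_of_integrable (hμν : μ ≪ ν) (h : Integrable (llr μ ν) μ) :
    klDiv μ ν = ((∫ x, llr μ ν x ∂μ : ℝ) : EReal) :=
  if_pos ⟨hμν, h⟩

lemma klDiv_of_not_integrable (h : ¬ Integrable (llr μ ν) μ) : klDiv μ ν = ⊤ :=
  if_neg fun h' => h h'.2

lemma lintegral_div_rnDeriv_le [μ.HaveLebesgueDecomposition ν] (hμν : μ ≪ ν) {h : α → ℝ≥0∞}
    (hh : Measurable h) : ∫⁻ x, h x / μ.rnDeriv ν x ∂μ ≤ ∫⁻ x, h x ∂ν := by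
  rw [← lintegral_rnDeriv_mul hμν (f := fun x => h x / μ.rnDeriv ν x)
    (hh.div (μ.measurable_rnDeriv ν)).aemeasurable]
  exact lintegral_mono fun x => ENNReal.mul_div_le

lemma integrable_toReal_div_rnDeriv [μ.HaveLebesgueDecomposition ν] (hμν : μ ≪ ν)
    {h : α → ℝ≥0∞} (hh : Measurable h) (h_ne_top : ∫⁻ x, h x ∂ν ≠ ⊤) :
    Integrable (fun x => (h x / μ.rnDeriv ν x).toReal) μ :=
  integrable_toReal_of_lintegral_ne_top (hh.div (μ.measurable_rnDeriv ν)).aemeasurable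
    ((lintegral_div_rnDeriv_le hμν hh).trans_lt h_ne_top.lt_top).ne

lemma integral_toReal_div_rnDeriv_le [μ.HaveLebesgueDecomposition ν] (hμν : μ ≪ ν)
    {h : α → ℝ≥0∞} (hh : Measurable h) (h_ne_top : ∫⁻ x, h x ∂ν ≠ ⊤) :
    ∫ x, (h x / μ.rnDeriv ν x).toReal ∂μ ≤ (∫⁻ x, h x ∂ν).toReal := by
  have hmeas : AEMeasurable (fun x => h x / μ.rnDeriv ν x) μ :=
    (hh.div (μ.measurable_rnDeriv ν)).aemeasurable
  have hle := lintegral_div_rnDeriv_le hμν hh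
  rw [integral_toReal hmeas (ae_lt_top' hmeas (hle.trans_lt h_ne_top.lt_top).ne)]
  exact ENNReal.toReal_mono h_ne_top hle

lemma integrable_toReal_inv_rnDeriv [μ.HaveLebesgueDecomposition π] [IsFiniteMeasure π]
    (hμπ : μ ≪ π) : Integrable (fun x => (μ.rnDeriv π x)⁻¹.toReal) μ := by
  simpa only [Pi.one_apply, one_div] using
    integrable_toReal_div_rnDeriv hμπ (h := 1) measurable_const (by simp)

lemma integrable_llr_of_ae_le [μ.HaveLebesgueDecomposition π] [IsFiniteMeasure π] (hμπ : μ ≪ π)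
    {F : α → ℝ} (hF : Integrable F μ) (hle : ∀ᵐ x ∂μ, llr μ π x ≤ F x) :
    Integrable (llr μ π) μ := by
  refine (hF.sup (integrable_toReal_inv_rnDeriv hμπ)).mono'
    (measurable_llr μ π).aestronglyMeasurable ?_
  filter_upwards [hle] with x hx
  have hneg := ENNReal.neg_log_toReal_le_toReal_inv (μ.rnDeriv π x)
  rw [Real.norm_eq_abs, abs_le, Pi.sup_apply]
  exact ⟨by rw [llr]; linarith [le_sup_right (a := F x) (b := (μ.rnDeriv π x)⁻¹.toReal)],
    hx.trans le_sup_left⟩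

lemma lintegral_rnDeriv_eq_lintegral_rnDeriv_sq [ν.HaveLebesgueDecomposition π] (hνπ : ν ≪ π) :
    ∫⁻ x, ν.rnDeriv π x ∂ν = ∫⁻ x, ν.rnDeriv π x ^ 2 ∂π := by
  rw [← lintegral_rnDeriv_mul hνπ (ν.measurable_rnDeriv π).aemeasurable]
  simp_rw [sq]

lemma lintegral_rnDeriv_sq_ne_zero [ν.HaveLebesgueDecomposition π] [NeZero ν] (hνπ : ν ≪ π) :
    ∫⁻ x, ν.rnDeriv π x ^ 2 ∂π ≠ 0 := by
  rw [← lintegral_rnDeriv_eq_lintegral_rnDeriv_sq hνπ, Ne,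
    lintegral_eq_zero_iff (ν.measurable_rnDeriv π)]
  intro h
  obtain ⟨x, hpos, hzero⟩ := ((Measure.rnDeriv_pos hνπ).and h).exists
  exact hpos.ne' hzero

lemma ae_llr_le_two_mul_llr_add [SigmaFinite μ] [SigmaFinite ν] [SigmaFinite π] (hμν : μ ≪ ν)
    (hνπ : ν ≪ π) {R : ℝ} (hR : 0 < R) :
    ∀ᵐ x ∂μ, llr μ π x ≤
      2 * llr μ ν x + (ν.rnDeriv π x / μ.rnDeriv ν x).toReal / R + (Real.log R - 1) := by
  filter_upwards [Measure.rnDeriv_pos hμν, hμν.ae_le (μ.rnDeriv_lt_top ν),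
    hμν.ae_le (Measure.rnDeriv_pos hνπ), hμν.ae_le (hνπ.ae_le (ν.rnDeriv_lt_top π)),
    hμν.ae_le (Measure.rnDeriv_mul_rnDeriv' (μ := μ) hνπ)] with x hf_pos hf_lt hg_pos hg_lt hfg
  rw [llr, llr, ← hfg, Pi.mul_apply, ENNReal.toReal_mul, ENNReal.toReal_div]
  exact Real.log_mul_le_two_mul_log_add (ENNReal.toReal_pos hf_pos.ne' hf_lt.ne)
    (ENNReal.toReal_pos hg_pos.ne' hg_lt.ne) hR

lemma integral_llr_le [IsProbabilityMeasure μ] [SigmaFinite ν] [IsFiniteMeasure π] (hμν : μ ≪ ν)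
    (hνπ : ν ≪ π) (hint : Integrable (llr μ ν) μ) (hZ₀ : ∫⁻ x, ν.rnDeriv π x ^ 2 ∂π ≠ 0)
    (hZ : ∫⁻ x, ν.rnDeriv π x ^ 2 ∂π ≠ ⊤) :
    Integrable (llr μ π) μ ∧ ∫ x, llr μ π x ∂μ ≤
      2 * ∫ x, llr μ ν x ∂μ + Real.log (∫⁻ x, ν.rnDeriv π x ^ 2 ∂π).toReal := by
  set R := (∫⁻ x, ν.rnDeriv π x ^ 2 ∂π).toReal
  have hR : 0 < R := ENNReal.toReal_pos hZ₀ hZ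
  set e := fun x => ν.rnDeriv π x / μ.rnDeriv ν x
  have hg_ne_top : ∫⁻ x, ν.rnDeriv π x ∂ν ≠ ⊤ := by
    rwa [lintegral_rnDeriv_eq_lintegral_rnDeriv_sq hνπ]
  have he_int : Integrable (fun x => (e x).toReal) μ :=
    integrable_toReal_div_rnDeriv hμν (ν.measurable_rnDeriv π) hg_ne_top
  have he_integral : ∫ x, (e x).toReal ∂μ ≤ R := by
    simpa only [lintegral_rnDeriv_eq_lintegral_rnDeriv_sq hνπ] using
      integral_toReal_div_rnDeriv_le hμν (ν.measurable_rnDeriv π) hg_ne_top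
  have hF_int : Integrable (fun x => 2 * llr μ ν x + (e x).toReal / R + (Real.log R - 1)) μ :=
    ((hint.const_mul 2).add (he_int.div_const R)).add (integrable_const _)
  have hle := ae_llr_le_two_mul_llr_add hμν hνπ hR
  have hllr_int := integrable_llr_of_ae_le (hμν.trans hνπ) hF_int hle
  refine ⟨hllr_int, ?_⟩
  calc ∫ x, llr μ π x ∂μ ≤ ∫ x, 2 * llr μ ν x + (e x).toReal / R + (Real.log R - 1) ∂μ :=
        integral_mono_ae hllr_int hF_int hle
    _ = 2 * ∫ x, llr μ ν x ∂μ + (∫ x, (e x).toReal ∂μ) / R + (Real.log R - 1) := by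
        rw [integral_add (f := fun x => 2 * llr μ ν x + (e x).toReal / R)
            ((hint.const_mul 2).add (he_int.div_const R)) (integrable_const _),
          integral_add (hint.const_mul 2) (he_int.div_const R), integral_const,
          integral_const_mul, integral_div]
        simp
    _ ≤ 2 * ∫ x, llr μ ν x ∂μ + Real.log R := by
        have := (div_le_one hR).2 he_integral
        linarith

end

/-- KL weak triangle inequality:
`KL(μ ‖ π) ≤ 2 KL(μ ‖ ν) + log (1 + χ²(ν ‖ π))`, where
`1 + χ²(ν ‖ π) = ∫ (dν/dπ)² dπ`. -/
theorem kl_weak_triangle {Ω : Type*} [MeasurableSpace Ω]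
    (μ ν π : Measure Ω)
    [IsProbabilityMeasure μ] [IsProbabilityMeasure ν] [IsProbabilityMeasure π]
    (hμν : μ ≪ ν) (hνπ : ν ≪ π) :
    klDiv μ π ≤ (2 : EReal) * klDiv μ ν + ENNReal.log (∫⁻ x, ν.rnDeriv π x ^ 2 ∂π) := by
  have hZ₀ := lintegral_rnDeriv_sq_ne_zero hνπ
  by_cases hint : Integrable (llr μ ν) μ
  swap
  · rw [klDiv_of_not_integrable hint, EReal.mul_top_of_pos two_pos,
      EReal.top_add_of_ne_bot (ENNReal.log_eq_bot_iff.not.2 hZ₀)]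
    exact le_top
  rw [klDiv_of_integrable hμν hint, show (2 : EReal) = (2 : ℝ) from rfl, ← EReal.coe_mul]
  by_cases hZ : ∫⁻ x, ν.rnDeriv π x ^ 2 ∂π = ⊤
  · rw [hZ, ENNReal.log_top, EReal.add_top_of_ne_bot (EReal.coe_ne_bot _)]
    exact le_top
  obtain ⟨hint', hle⟩ := integral_llr_le hμν hνπ hint hZ₀ hZ
  rw [klDiv_of_integrable (hμν.trans hνπ) hint', ENNReal.log_pos_real' (ENNReal.toReal_pos hZ₀ hZ)]
  exact_mod_cast hle
end

section
/- (Rényi change of measure for tail probabilities.) Let μ, π be probability measures on a measurable space Ω, let φ: Ω → ℝ be measurable, and suppose π{φ ≥ h} ≤ ψ(h) for some h ∈ ℝ and some bound ψ(h) ≥ 0. Then for any q > 1, μ{φ ≥ h} ≤ ψ(h)^{(q-1)/q} · exp(((q-1)/q) R_q(μ ‖ π)). -/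
open MeasureTheory
open scoped Classical

section RenyiDiv

variable {Ω : Type*} [MeasurableSpace Ω] {μ ν : Measure Ω}

theorem absolutelyContinuous_of_renyiDiv_ne_top {q : ℝ} (h : renyiDiv q μ ν ≠ ⊤) : μ ≪ ν := by
  by_contra hμν
  exact h (if_neg hμν)

theorem lintegral_rnDeriv_rpow_of_renyiDiv_eq_coe {q R : ℝ} (hq : q ≠ 1)
    (h : renyiDiv q μ ν = R) :
    ∫⁻ x, μ.rnDeriv ν x ^ q ∂ν = ENNReal.ofReal (Real.exp ((q - 1) * R)) := by
  have hμν := absolutelyContinuous_of_renyiDiv_ne_top (h ▸ EReal.coe_ne_top R)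
  rw [renyiDiv, if_pos hμν] at h
  have hlog : ENNReal.log (∫⁻ x, μ.rnDeriv ν x ^ q ∂ν) = ((q - 1) * R : ℝ) := by
    have hq' : (q - 1 : ℝ) ≠ 0 := sub_ne_zero.2 hq
    rw [EReal.coe_mul, ← h, ← mul_assoc, ← EReal.coe_mul, mul_inv_cancel₀ hq', EReal.coe_one,
      one_mul]
  rw [← ENNReal.exp_log (∫⁻ x, μ.rnDeriv ν x ^ q ∂ν), hlog, EReal.exp_coe]

end RenyiDiv

/-- Hölder's inequality applied to `μ s = ∫_s (dμ/dν) dν`. -/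
theorem measure_le_lintegral_rnDeriv_rpow_mul_measure {α : Type*} [MeasurableSpace α]
    {μ ν : Measure α} [μ.HaveLebesgueDecomposition ν] [SFinite ν] (hμν : μ ≪ ν)
    {p q : ℝ} (hpq : p.HolderConjugate q) (s : Set α) :
    μ s ≤ (∫⁻ x, μ.rnDeriv ν x ^ p ∂ν) ^ (1 / p) * ν s ^ (1 / q) := by
  have holder := ENNReal.lintegral_mul_le_Lp_mul_Lq (ν.restrict s) hpq
    (μ.measurable_rnDeriv ν).aemeasurable aemeasurable_const (g := fun _ ↦ 1)
  simp only [Pi.mul_apply, mul_one, ENNReal.one_rpow, lintegral_const, Measure.restrict_apply_univ,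
    one_mul, Measure.setLIntegral_rnDeriv hμν] at holder
  refine holder.trans ?_
  gcongr
  · exact one_div_nonneg.2 hpq.nonneg
  · exact Measure.restrict_le_self

theorem renyi_change_of_measure_general {Ω : Type*} [MeasurableSpace Ω]
    (μ π : Measure Ω) [IsProbabilityMeasure μ] [IsProbabilityMeasure π]
    (q : ℝ) (hq : 1 < q)
    (φ : Ω → ℝ) (h ψh : ℝ)
    (htail : (π {x | h ≤ φ x}).toReal ≤ ψh)
    (Rq : ℝ) (hRq : renyiDiv q μ π = (Rq : EReal)) :
    (μ {x | h ≤ φ x}).toReal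
      ≤ ψh ^ ((q - 1) / q) * Real.exp (((q - 1) / q) * Rq) := by
  set A := {x | h ≤ φ x}
  have hμπ := absolutelyContinuous_of_renyiDiv_ne_top (hRq ▸ EReal.coe_ne_top Rq)
  have hconj : 1 / q.conjExponent = (q - 1) / q := one_div_div q (q - 1)
  have hμA := measure_le_lintegral_rnDeriv_rpow_mul_measure hμπ
    (Real.HolderConjugate.conjExponent hq) A
  rw [lintegral_rnDeriv_rpow_of_renyiDiv_eq_coe hq.ne' hRq, hconj] at hμA
  have hexp : Real.exp ((q - 1) * Rq) ^ (1 / q) = Real.exp (((q - 1) / q) * Rq) := by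
    rw [← Real.exp_mul]; ring_nf
  calc (μ A).toReal
      ≤ (ENNReal.ofReal (Real.exp ((q - 1) * Rq)) ^ (1 / q) * π A ^ ((q - 1) / q)).toReal :=
        ENNReal.toReal_mono (by finiteness) hμA
    _ = Real.exp (((q - 1) / q) * Rq) * (π A).toReal ^ ((q - 1) / q) := by
        rw [ENNReal.toReal_mul, ← ENNReal.toReal_rpow, ← ENNReal.toReal_rpow,
          ENNReal.toReal_ofReal (Real.exp_pos _).le, hexp]
    _ ≤ ψh ^ ((q - 1) / q) * Real.exp (((q - 1) / q) * Rq) := by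
        rw [mul_comm]
        gcongr

/-- Rényi change of measure for tail probabilities: if `π{φ ≥ h} ≤ ψ(h)` and
`R_q(μ ‖ π)` is finite, then `μ{φ ≥ h} ≤ ψ(h)^{(q-1)/q} exp(((q-1)/q) R_q(μ ‖ π))`. -/
theorem renyi_change_of_measure {Ω : Type*} [MeasurableSpace Ω]
    (μ π : Measure Ω) [IsProbabilityMeasure μ] [IsProbabilityMeasure π]
    (q : ℝ) (hq : 1 < q)
    (φ : Ω → ℝ) (hφ : Measurable φ) (h ψh : ℝ) (hψ : 0 ≤ ψh)
    (htail : (π {x | h ≤ φ x}).toReal ≤ ψh)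
    (Rq : ℝ) (hRq : renyiDiv q μ π = (Rq : EReal)) :
    (μ {x | h ≤ φ x}).toReal
      ≤ ψh ^ ((q - 1) / q) * Real.exp (((q - 1) / q) * Rq) :=
  renyi_change_of_measure_general μ π q hq φ h ψh htail Rq hRq
end

section
/- (Sub-Gaussianity of the score.) Let π ∝ exp(-V) be a probability measure on ℝ^d where V is continuously differentiable and ∇V is β-Lipschitz. Then for every v ∈ ℝ^d, E_π[exp⟨∇V, v⟩] ≤ exp(β‖v‖²/2). -/
/-!
Since `∇V` is `β`-Lipschitz, the descent lemma `V (x - v) ≤ V x - ⟪∇V x, v⟫ + β ‖v‖² / 2` gives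
`exp ⟪∇V x, v⟫ · e^{-V x} ≤ exp (β ‖v‖² / 2) · e^{-V (x - v)}`. Integrated against Lebesgue
measure, the right-hand side is a translate of the unnormalised density, whose total mass is
unchanged by translation invariance.
-/

open MeasureTheory
open scoped RealInnerProductSpace ENNReal NNReal

theorem image_add_le_of_lipschitzWith_fderiv {E : Type*} [NormedAddCommGroup E] [NormedSpace ℝ E]
    {f : E → ℝ} {K : ℝ≥0} (hf : Differentiable ℝ f) (hK : LipschitzWith K (fderiv ℝ f))
    (x v : E) : f (x + v) ≤ f x + fderiv ℝ f x v + K * ‖v‖ ^ 2 / 2 := by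
  set g : ℝ → ℝ := fun t => f (x + t • v) - t * fderiv ℝ f x v - K * t ^ 2 * ‖v‖ ^ 2 / 2
  have hg : ∀ t, HasDerivAt g (fderiv ℝ f (x + t • v) v - fderiv ℝ f x v - K * t * ‖v‖ ^ 2) t := by
    intro t
    have hline : HasDerivAt (fun t : ℝ => x + t • v) v t := by
      simpa using ((hasDerivAt_id t).smul_const v).const_add x
    refine ((((hf _).hasFDerivAt.comp_hasDerivAt t hline).sub
      ((hasDerivAt_id t).mul_const (fderiv ℝ f x v))).sub
      (((hasDerivAt_pow 2 t).const_mul (K : ℝ)).mul_const (‖v‖ ^ 2) |>.div_const 2)).congr_deriv ?_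
    ring
  have hderiv_le : ∀ t, 0 ≤ t → fderiv ℝ f (x + t • v) v - fderiv ℝ f x v ≤ K * t * ‖v‖ ^ 2 := by
    intro t ht
    calc fderiv ℝ f (x + t • v) v - fderiv ℝ f x v
        = (fderiv ℝ f (x + t • v) - fderiv ℝ f x) v := rfl
      _ ≤ ‖fderiv ℝ f (x + t • v) - fderiv ℝ f x‖ * ‖v‖ :=
        (Real.le_norm_self _).trans (ContinuousLinearMap.le_opNorm _ _)
      _ ≤ K * ‖t • v‖ * ‖v‖ := by
        gcongr
        simpa [dist_eq_norm] using hK.dist_le_mul (x + t • v) x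
      _ = K * t * ‖v‖ ^ 2 := by rw [norm_smul, Real.norm_of_nonneg ht]; ring
  have hanti : AntitoneOn g (Set.Ici 0) := by
    refine antitoneOn_of_deriv_nonpos (convex_Ici 0)
      (fun t _ => (hg t).continuousAt.continuousWithinAt)
      (fun t _ => (hg t).differentiableAt.differentiableWithinAt) fun t ht => ?_
    rw [interior_Ici] at ht
    rw [(hg t).deriv]
    linarith [hderiv_le t (le_of_lt ht)]
  have hg_one_le := hanti Set.self_mem_Ici (show (1:ℝ) ∈ Set.Ici 0 by norm_num) zero_le_one
  simp only [g, one_smul, zero_smul, add_zero] at hg_one_le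
  linarith

theorem image_add_le_of_lipschitzWith_gradient {E : Type*} [NormedAddCommGroup E]
    [InnerProductSpace ℝ E] [CompleteSpace E] {f : E → ℝ} {K : ℝ≥0} (hf : Differentiable ℝ f)
    (hK : LipschitzWith K (gradient f)) (x v : E) :
    f (x + v) ≤ f x + ⟪gradient f x, v⟫ + K * ‖v‖ ^ 2 / 2 := by
  have hfderiv : fderiv ℝ f = InnerProductSpace.toDual ℝ E ∘ gradient f :=
    funext fun y => ((InnerProductSpace.toDual ℝ E).apply_symm_apply _).symm
  have hK' : LipschitzWith K (fderiv ℝ f) := by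
    simpa only [hfderiv, one_mul] using (InnerProductSpace.toDual ℝ E).lipschitz.comp hK
  have := image_add_le_of_lipschitzWith_fderiv hf hK' x v
  rwa [hfderiv, Function.comp_apply, InnerProductSpace.toDual_apply_apply] at this

theorem lintegral_withDensity_le_of_mul_le_shift {G : Type*} [MeasurableSpace G] [AddGroup G]
    [MeasurableAdd G] {μ : Measure G} [μ.IsAddRightInvariant] {ρ : G → ℝ≥0∞} (hρ : Measurable ρ)
    {f : G → ℝ≥0∞} {C : ℝ≥0∞} (v : G) (h : ∀ x, ρ x * f x ≤ C * ρ (x - v)) :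
    ∫⁻ x, f x ∂μ.withDensity ρ ≤ C * μ.withDensity ρ Set.univ := by
  have hρ_shift : Measurable fun x => ρ (x - v) := by
    simpa only [sub_eq_add_neg, Function.comp_def] using hρ.comp (measurable_add_const (-v))
  calc ∫⁻ x, f x ∂μ.withDensity ρ
      ≤ ∫⁻ x, ρ x * f x ∂μ := lintegral_withDensity_le_lintegral_mul μ hρ f
    _ ≤ ∫⁻ x, C * ρ (x - v) ∂μ := lintegral_mono h
    _ = C * μ.withDensity ρ Set.univ := by
      rw [lintegral_const_mul _ hρ_shift, lintegral_sub_right_eq_self,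
        withDensity_apply _ MeasurableSet.univ, Measure.restrict_univ]

theorem exp_neg_mul_exp_inner_gradient_le {E : Type*} [NormedAddCommGroup E]
    [InnerProductSpace ℝ E] [CompleteSpace E] {f : E → ℝ} {K : ℝ≥0} (hf : Differentiable ℝ f)
    (hK : LipschitzWith K (gradient f)) (x v : E) :
    Real.exp (-f x) * Real.exp ⟪gradient f x, v⟫ ≤
      Real.exp (K * ‖v‖ ^ 2 / 2) * Real.exp (-f (x - v)) := by
  have := image_add_le_of_lipschitzWith_gradient hf hK x (-v)
  rw [inner_neg_right, norm_neg, ← sub_eq_add_neg] at this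
  rw [← Real.exp_add, ← Real.exp_add, Real.exp_le_exp]
  linarith

theorem score_subgaussian_general (d : ℕ) (V : EuclideanSpace ℝ (Fin d) → ℝ)
    (β : ℝ) (hβ : 0 ≤ β) (hV : ContDiff ℝ 1 V)
    (hLip : LipschitzWith β.toNNReal (gradient V))
    (π : Measure (EuclideanSpace ℝ (Fin d))) [IsProbabilityMeasure π]
    (c : ℝ≥0∞)
    (hπ : π = c • (volume.withDensity fun x => ENNReal.ofReal (Real.exp (-V x)))) :
    ∀ v : EuclideanSpace ℝ (Fin d),
      ∫ x, Real.exp ⟪gradient V x, v⟫ ∂π ≤ Real.exp (β * ‖v‖ ^ 2 / 2) := by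
  intro v
  set ρ : EuclideanSpace ℝ (Fin d) → ℝ≥0∞ := fun x => ENNReal.ofReal (Real.exp (-V x))
  set C := Real.exp (β * ‖v‖ ^ 2 / 2)
  have hρ : Measurable ρ := by
    have := hV.continuous.measurable
    fun_prop
  have hshift (x) :
      ρ x * ENNReal.ofReal (Real.exp ⟪gradient V x, v⟫) ≤ ENNReal.ofReal C * ρ (x - v) := by
    rw [← ENNReal.ofReal_mul (Real.exp_nonneg _), ← ENNReal.ofReal_mul (Real.exp_nonneg _)]
    refine ENNReal.ofReal_le_ofReal ?_
    simpa [C, Real.coe_toNNReal β hβ] using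
      exp_neg_mul_exp_inner_gradient_le (hV.differentiable one_ne_zero) hLip x v
  have hlintegral : ∫⁻ x, ENNReal.ofReal (Real.exp ⟪gradient V x, v⟫) ∂π ≤ ENNReal.ofReal C :=
    calc ∫⁻ x, ENNReal.ofReal (Real.exp ⟪gradient V x, v⟫) ∂π
        = c * ∫⁻ x, ENNReal.ofReal (Real.exp ⟪gradient V x, v⟫) ∂volume.withDensity ρ := by
          rw [hπ, lintegral_smul_measure, smul_eq_mul]
      _ ≤ c * (ENNReal.ofReal C * volume.withDensity ρ Set.univ) := by
          gcongr
          exact lintegral_withDensity_le_of_mul_le_shift hρ v hshift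
      _ = ENNReal.ofReal C := by
          rw [mul_left_comm, ← smul_eq_mul c, ← Measure.smul_apply, ← hπ, measure_univ, mul_one]
  calc ∫ x, Real.exp ⟪gradient V x, v⟫ ∂π
      ≤ ‖∫ x, Real.exp ⟪gradient V x, v⟫ ∂π‖ := Real.le_norm_self _
    _ ≤ (∫⁻ x, ENNReal.ofReal ‖Real.exp ⟪gradient V x, v⟫‖ ∂π).toReal :=
      norm_integral_le_lintegral_norm _
    _ ≤ C := by
      simp only [Real.norm_of_nonneg (Real.exp_nonneg _)]
      exact ENNReal.toReal_le_of_le_ofReal (Real.exp_nonneg _) hlintegral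

/-- Sub-Gaussianity of the score: if `π ∝ exp(-V)` on `ℝ^d` with `∇V` `β`-Lipschitz, then
for every `v`, `E_π[exp ⟪∇V, v⟫] ≤ exp (β ‖v‖² / 2)`. -/
theorem score_subgaussian (d : ℕ) (V : EuclideanSpace ℝ (Fin d) → ℝ)
    (β : ℝ) (hβ : 0 ≤ β) (hV : ContDiff ℝ 1 V)
    (hLip : LipschitzWith β.toNNReal (gradient V))
    (π : Measure (EuclideanSpace ℝ (Fin d))) [IsProbabilityMeasure π]
    (c : ℝ≥0∞) (hc0 : c ≠ 0) (hctop : c ≠ ⊤)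
    (hπ : π = c • (volume.withDensity fun x => ENNReal.ofReal (Real.exp (-V x)))) :
    ∀ v : EuclideanSpace ℝ (Fin d),
      ∫ x, Real.exp ⟪gradient V x, v⟫ ∂π ≤ Real.exp (β * ‖v‖ ^ 2 / 2) :=
  score_subgaussian_general d V β hβ hV hLip π c hπ
end

section
/- (Finite-dimensional Girsanov exponential has unit expectation.) Under the hypotheses of the finite-dimensional anticipating change of measure with T = id + ψ a C¹ bijection of ℝⁿ and det(I + Dψ) never zero, the random variable M(x) := |det(I + Dψ(x))| exp(−⟨ψ(x), x⟩ − ½‖ψ(x)‖²) satisfies ∫ M dγ_n = 1, i.e. M is a probability density with respect to the standard Gaussian measure γ_n. -/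
/-!
Writing `φ` for the standard Gaussian density on `ℝⁿ`, completing the square gives the
Cameron–Martin identity `φ(x) M(x) = |det DT(x)| φ(T x)`. Hence `∫ M dγ_n = ∫ |det DT| (φ ∘ T)`,
which by the change of variables formula for the bijection `T` is `∫ φ = 1`.
-/

open MeasureTheory ProbabilityTheory

/-- The standard Gaussian measure on `Fin n → ℝ`. -/
noncomputable def gaussPi (n : ℕ) : Measure (Fin n → ℝ) :=
  Measure.pi fun _ => gaussianReal 0 1

/-- The Jacobian matrix of `ψ : ℝⁿ → ℝⁿ` at `x`. -/
noncomputable def jacobian (n : ℕ) (ψ : (Fin n → ℝ) → (Fin n → ℝ)) (x : Fin n → ℝ) :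
    Matrix (Fin n) (Fin n) ℝ :=
  Matrix.of fun i j => fderiv ℝ ψ x (Pi.single j 1) i

open scoped ENNReal

namespace MeasureTheory

variable {E : Type*} [MeasurableSpace E]

theorem lintegral_fin_nat_prod_eq_prod {n : ℕ} {μ : Fin n → Measure E} [∀ i, SigmaFinite (μ i)]
    {f : Fin n → E → ℝ≥0∞} (hf : ∀ i, Measurable (f i)) :
    ∫⁻ x : Fin n → E, ∏ i, f i (x i) ∂Measure.pi μ = ∏ i, ∫⁻ t, f i t ∂μ i := by
  induction n with
  | zero => simp
  | succ n ih =>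
    calc
      _ = ∫⁻ x : E × (Fin n → E), f 0 x.1 * ∏ i : Fin n, f i.succ (x.2 i)
          ∂(μ 0).prod (Measure.pi fun i => μ i.succ) := by
        rw [← (measurePreserving_piFinSuccAbove μ 0).symm.lintegral_comp_emb
          (MeasurableEquiv.measurableEmbedding _)]
        simp_rw [MeasurableEquiv.piFinSuccAbove_symm_apply, Fin.insertNthEquiv,
          Fin.prod_univ_succ, Fin.insertNth_zero, Equiv.coe_fn_mk, Fin.cons_succ,
          Fin.zero_succAbove, cast_eq, Fin.cons_zero]
      _ = (∫⁻ t, f 0 t ∂μ 0) * ∏ i : Fin n, ∫⁻ t, f i.succ t ∂μ i.succ := by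
        have hg : Measurable fun y : Fin n → E => ∏ i, f i.succ (y i) :=
          Finset.measurable_prod _ fun i _ => (hf i.succ).comp (measurable_pi_apply i)
        rw [← ih fun i => hf i.succ, ← lintegral_prod_mul (hf 0).aemeasurable hg.aemeasurable]
      _ = ∏ i, ∫⁻ t, f i t ∂μ i := by rw [Fin.prod_univ_succ]

theorem lintegral_fintype_prod_eq_prod {ι : Type*} [Fintype ι] {μ : ι → Measure E}
    [∀ i, SigmaFinite (μ i)] {f : ι → E → ℝ≥0∞} (hf : ∀ i, Measurable (f i)) :
    ∫⁻ x : ι → E, ∏ i, f i (x i) ∂Measure.pi μ = ∏ i, ∫⁻ t, f i t ∂μ i := by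
  let e := (Fintype.equivFin ι).symm
  rw [← (measurePreserving_piCongrLeft _ e).lintegral_comp_emb
    (MeasurableEquiv.measurableEmbedding _)]
  simp_rw [← e.prod_comp, MeasurableEquiv.coe_piCongrLeft, Equiv.piCongrLeft_apply_apply]
  exact lintegral_fin_nat_prod_eq_prod fun i => hf _

theorem Measure.pi_withDensity {ι : Type*} [Fintype ι] (μ : ι → Measure E)
    [∀ i, SigmaFinite (μ i)] {f : ι → E → ℝ≥0∞} (hf : ∀ i, Measurable (f i))
    (hf_ne_top : ∀ i, ∀ᵐ t ∂μ i, f i t ≠ ∞) :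
    Measure.pi (fun i => (μ i).withDensity (f i))
      = (Measure.pi μ).withDensity fun x => ∏ i, f i (x i) := by
  have := fun i => SigmaFinite.withDensity_of_ne_top (hf_ne_top i)
  refine Measure.pi_eq fun s hs => ?_
  rw [withDensity_apply _ (MeasurableSet.univ_pi hs), Measure.restrict_pi_pi,
    lintegral_fintype_prod_eq_prod hf]
  exact Finset.prod_congr rfl fun i _ => (withDensity_apply _ (hs i)).symm

end MeasureTheory

theorem gaussPi_eq_withDensity (n : ℕ) :
    gaussPi n = volume.withDensity fun x => ∏ i, gaussianPDF 0 1 (x i) := by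
  simp_rw [gaussPi, gaussianReal_of_var_ne_zero 0 one_ne_zero]
  exact Measure.pi_withDensity _ (fun _ => measurable_gaussianPDF 0 1)
    fun _ => ae_of_all _ fun _ => gaussianPDF_ne_top

theorem lintegral_prod_gaussianPDF_eq_one (ι : Type*) [Fintype ι] :
    ∫⁻ x : ι → ℝ, ∏ i, gaussianPDF 0 1 (x i) = 1 := by
  rw [volume_pi, lintegral_fintype_prod_eq_prod fun _ => measurable_gaussianPDF 0 1]
  simp [lintegral_gaussianPDF_eq_one 0 one_ne_zero]

theorem gaussianPDFReal_zero_one_add (x y : ℝ) :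
    gaussianPDFReal 0 1 (x + y) = gaussianPDFReal 0 1 x * Real.exp (-(y * x) - y ^ 2 / 2) := by
  simp only [gaussianPDFReal, sub_zero, NNReal.coe_one, mul_one]
  rw [mul_assoc, ← Real.exp_add]
  congr 2
  ring

theorem prod_gaussianPDF_add {ι : Type*} [Fintype ι] (x y : ι → ℝ) :
    ∏ i, gaussianPDF 0 1 (x i + y i)
      = (∏ i, gaussianPDF 0 1 (x i))
        * ENNReal.ofReal (Real.exp (-(∑ i, y i * x i) - (∑ i, y i ^ 2) / 2)) := by
  have hexp : Real.exp (-(∑ i, y i * x i) - (∑ i, y i ^ 2) / 2)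
      = ∏ i, Real.exp (-(y i * x i) - y i ^ 2 / 2) := by
    rw [← Real.exp_sum, Finset.sum_sub_distrib, Finset.sum_neg_distrib, Finset.sum_div]
  simp_rw [hexp, gaussianPDF, gaussianPDFReal_zero_one_add,
    ENNReal.ofReal_mul (gaussianPDFReal_nonneg _ _ _), Finset.prod_mul_distrib,
    ENNReal.ofReal_prod_of_nonneg fun i _ => (Real.exp_pos _).le]

theorem lintegral_abs_det_fderiv_mul_comp {F : Type*} [NormedAddCommGroup F] [NormedSpace ℝ F]
    [FiniteDimensional ℝ F] [MeasurableSpace F] [BorelSpace F] (μ : Measure F)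
    [μ.IsAddHaarMeasure] {T : F → F} {T' : F → F →L[ℝ] F} (hT' : ∀ x, HasFDerivAt T (T' x) x)
    (hT : Function.Bijective T) (g : F → ℝ≥0∞) :
    ∫⁻ x, ENNReal.ofReal |(T' x).det| * g (T x) ∂μ = ∫⁻ y, g y ∂μ := by
  have := lintegral_image_eq_lintegral_abs_det_fderiv_mul μ MeasurableSet.univ
    (fun x _ => (hT' x).hasFDerivWithinAt) hT.injective.injOn g
  simpa only [Set.image_univ, hT.surjective.range_eq, Measure.restrict_univ] using this.symm

theorem toMatrix'_fderiv_eq_jacobian (n : ℕ) (ψ : (Fin n → ℝ) → (Fin n → ℝ)) (x : Fin n → ℝ) :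
    LinearMap.toMatrix' (fderiv ℝ ψ x : (Fin n → ℝ) →ₗ[ℝ] (Fin n → ℝ)) = jacobian n ψ x := by
  ext i j
  simp [LinearMap.toMatrix'_apply, jacobian]

theorem det_id_add_fderiv_eq_det_one_add_jacobian (n : ℕ) (ψ : (Fin n → ℝ) → (Fin n → ℝ))
    (x : Fin n → ℝ) :
    (ContinuousLinearMap.id ℝ _ + fderiv ℝ ψ x).det = (1 + jacobian n ψ x).det := by
  rw [ContinuousLinearMap.det, ← LinearMap.det_toMatrix', ContinuousLinearMap.toLinearMap_add,
    ContinuousLinearMap.coe_id, map_add, LinearMap.toMatrix'_id, toMatrix'_fderiv_eq_jacobian]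

theorem girsanov_exponential_unit_expectation_general (n : ℕ)
    (ψ : (Fin n → ℝ) → (Fin n → ℝ)) (hψ : ContDiff ℝ 1 ψ)
    (hbij : Function.Bijective fun x => x + ψ x) :
    ∫⁻ x, ENNReal.ofReal
        (|(1 + jacobian n ψ x).det|
          * Real.exp (-(∑ i, ψ x i * x i) - (∑ i, ψ x i ^ 2) / 2)) ∂gaussPi n = 1 := by
  have hT' (x : Fin n → ℝ) :
      HasFDerivAt (fun x => x + ψ x) (ContinuousLinearMap.id ℝ _ + fderiv ℝ ψ x) x :=
    (hasFDerivAt_id x).add (hψ.differentiable one_ne_zero x).hasFDerivAt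
  rw [gaussPi_eq_withDensity, lintegral_withDensity_eq_lintegral_mul_non_measurable _
    (by fun_prop) (ae_of_all _ fun _ => ENNReal.prod_lt_top fun _ _ => gaussianPDF_lt_top)]
  calc
    _ = ∫⁻ x, ENNReal.ofReal |(ContinuousLinearMap.id ℝ _ + fderiv ℝ ψ x).det|
          * ∏ i, gaussianPDF 0 1 ((x + ψ x) i) := by
      refine lintegral_congr fun x => ?_
      rw [Pi.mul_apply, det_id_add_fderiv_eq_det_one_add_jacobian,
        ENNReal.ofReal_mul (abs_nonneg _)]
      simp only [Pi.add_apply, prod_gaussianPDF_add]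
      ring
    _ = ∫⁻ y : Fin n → ℝ, ∏ i, gaussianPDF 0 1 (y i) :=
      lintegral_abs_det_fderiv_mul_comp volume hT' hbij fun y => ∏ i, gaussianPDF 0 1 (y i)
    _ = 1 := lintegral_prod_gaussianPDF_eq_one (Fin n)

/-- The finite-dimensional Girsanov exponential
`M(x) = |det(I + Dψ(x))| exp(−⟨ψ(x), x⟩ − ½‖ψ(x)‖²)` is a probability density with
respect to the standard Gaussian when `T = id + ψ` is a `C¹` bijection with everywhere
invertible Jacobian. -/
theorem girsanov_exponential_unit_expectation (n : ℕ)
    (ψ : (Fin n → ℝ) → (Fin n → ℝ)) (hψ : ContDiff ℝ 1 ψ)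
    (hbij : Function.Bijective fun x => x + ψ x)
    (hdet : ∀ x, (1 + jacobian n ψ x).det ≠ 0) :
    ∫⁻ x, ENNReal.ofReal
        (|(1 + jacobian n ψ x).det|
          * Real.exp (-(∑ i, ψ x i * x i) - (∑ i, ψ x i ^ 2) / 2)) ∂gaussPi n = 1 :=
  girsanov_exponential_unit_expectation_general n ψ hψ hbij
end
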